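/- arXiv:2308.10749 — 3 statements merged into one kernel-verified Lean document; each statement's English description precedes it below -/
import Mathlib

section
/- (Disjoint Unions Theorem) For all positive integers r and k there exists a positive integer n such that for every r-coloring c of the nonempty subsets of [n] = {1,…,n}, there exist pairwise disjoint nonempty sets I₁,…,I_k ⊆ [n] such that the set {∪_{j∈J} I_j : J a nonempty subset of [k]} is monochromatic under c. -/
open Finset

/-- support of a natural number: the set of binary digit positions. -/
def dsupp (n : ℕ) : Finset ℕ := n.bitIndices.toFinset

lemma dsupp_val (s : Finset ℕ) : dsupp (∑ i ∈ s, 2 ^ i) = s :=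
  Finset.toFinset_bitIndices_twoPowSum s

lemma val_dsupp (n : ℕ) : ∑ i ∈ dsupp n, 2 ^ i = n :=
  Finset.twoPowSum_toFinset_bitIndices n

lemma dsupp_nonempty {n : ℕ} (hn : 0 < n) : (dsupp n).Nonempty := by
  rcases (dsupp n).eq_empty_or_nonempty with h | h
  · exfalso; have := val_dsupp n; rw [h] at this; simp at this; omega
  · exact h

lemma dsupp_subset_Ico {n ℓ L : ℕ} (hd : 2 ^ ℓ ∣ n) (hL : n < 2 ^ L) :
    dsupp n ⊆ Finset.Ico ℓ L := by
  intro a ha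
  rw [dsupp, List.mem_toFinset] at ha
  rw [Finset.mem_Ico]
  constructor
  · obtain ⟨z, rfl⟩ := hd
    rw [Nat.bitIndices_two_pow_mul] at ha
    obtain ⟨b, _, rfl⟩ := List.mem_map.mp ha
    omega
  · have h2 := Nat.two_pow_le_of_mem_bitIndices ha
    have := h2.trans_lt hL
    exact (Nat.pow_lt_pow_iff_right (by norm_num)).mp this

lemma FS_const_one_pos {m : ℕ} (hm : m ∈ Hindman.FS (Stream'.const 1)) : 1 ≤ m := by
  have : ∀ (a : Stream' ℕ) (x : ℕ), x ∈ Hindman.FS a → a = Stream'.const 1 → 1 ≤ x := by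
    intro a x h
    induction h with
    | head' a => rintro rfl; exact le_refl 1
    | tail' a m h ih => rintro rfl; exact ih (Stream'.tail_const 1)
    | cons' a m h ih =>
        rintro rfl
        have h1 : (Stream'.const 1).head = 1 := rfl
        rw [h1]; omega
  exact this _ _ hm rfl

/-- block extraction: from any tail of a stream of naturals one can find a block
whose sum is divisible by N. -/
lemma block_extract (b : Stream' ℕ) (t N : ℕ) (hN : 0 < N) :
    ∃ u v : ℕ, t ≤ u ∧ u < v ∧ N ∣ ∑ i ∈ Finset.Ico u v, b.get i := by
  set P : ℕ → ℕ := fun s => ∑ i ∈ Finset.Ico t (t + s), b.get i with hP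
  have maps : ∀ s ∈ Finset.range (N + 1), P s % N ∈ Finset.range N :=
    fun s _ => Finset.mem_range.mpr (Nat.mod_lt _ hN)
  obtain ⟨s₁, hs₁, s₂, hs₂, hne, heq⟩ :=
    Finset.exists_ne_map_eq_of_card_lt_of_maps_to (by simp) maps
  wlog hlt : s₁ < s₂ generalizing s₁ s₂
  · exact this s₂ hs₂ s₁ hs₁ hne.symm heq.symm (by omega)
  refine ⟨t + s₁, t + s₂, Nat.le_add_right _ _, by omega, ?_⟩
  have hsum : P s₁ + ∑ i ∈ Finset.Ico (t + s₁) (t + s₂), b.get i = P s₂ :=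
    Finset.sum_Ico_consecutive _ (by omega) (by omega)
  have h0 : P s₁ + 0 ≡ P s₁ + ∑ i ∈ Finset.Ico (t + s₁) (t + s₂), b.get i [MOD N] := by
    rw [add_zero, hsum]; exact heq
  have h1 : (0 : ℕ) ≡ ∑ i ∈ Finset.Ico (t + s₁) (t + s₂), b.get i [MOD N] :=
    Nat.ModEq.add_left_cancel' (P s₁) h0
  exact (Nat.modEq_zero_iff_dvd).mp h1.symm

lemma infinite_folkman (r : ℕ) (c : Finset ℕ → Fin r) :
    ∃ I : ℕ → Finset ℕ, (∀ j, (I j).Nonempty) ∧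
      (∀ j j' : ℕ, j ≠ j' → Disjoint (I j) (I j')) ∧
      ∃ col : Fin r, ∀ J : Finset ℕ, J.Nonempty → c (J.biUnion I) = col := by
  classical
  set c' : ℕ → Fin r := fun n => c (dsupp n) with hc'
  -- Hindman's theorem
  obtain ⟨T, ⟨col, rfl⟩, b, hb⟩ :=
    Hindman.FS_partition_regular (Stream'.const 1)
      (Set.range (fun v : Fin r => {m : ℕ | 1 ≤ m ∧ c' m = v}))
      (Set.finite_range _)
      (by
        intro m hm
        exact Set.mem_sUnion.mpr ⟨_, Set.mem_range_self (c' m), FS_const_one_pos hm, rfl⟩)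
  have hbpos : ∀ i, 1 ≤ b.get i := fun i => (hb (Hindman.FS.singleton b i)).1
  -- block extraction choice functions
  choose U V h1 h2 h3 using fun t ℓ => block_extract b t (2 ^ ℓ) (Nat.pow_pos two_pos)
  -- recursive construction
  let state : ℕ → ℕ × ℕ := fun j =>
    Nat.rec (0, 0)
      (fun _ s => (V s.1 s.2,
        s.2 + (∑ i ∈ Finset.Ico (U s.1 s.2) (V s.1 s.2), b.get i) + 1)) j
  set u : ℕ → ℕ := fun j => U (state j).1 (state j).2 with hu
  set v : ℕ → ℕ := fun j => V (state j).1 (state j).2 with hv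
  set ℓ : ℕ → ℕ := fun j => (state j).2 with hℓ
  set m : ℕ → ℕ := fun j => ∑ i ∈ Finset.Ico (u j) (v j), b.get i with hm
  have huv : ∀ j, u j < v j := fun j => h2 _ _
  have hdvd : ∀ j, 2 ^ ℓ j ∣ m j := fun j => h3 _ _
  have hstate : ∀ j, state (j + 1) = (v j, ℓ j + m j + 1) := fun j => rfl
  have hℓsucc : ∀ j, ℓ (j + 1) = ℓ j + m j + 1 := fun j => congrArg Prod.snd (hstate j)
  have hvu : ∀ j, v j ≤ u (j + 1) := by
    intro j
    have := h1 (state (j+1)).1 (state (j+1)).2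
    have h4 : (state (j+1)).1 = v j := congrArg Prod.fst (hstate j)
    rw [h4] at this; exact this
  have horder : ∀ j j', j < j' → v j ≤ u j' := by
    intro j j' hlt
    induction j' with
    | zero => omega
    | succ n ih =>
      rcases Nat.lt_succ_iff_lt_or_eq.mp hlt with h | h
      · exact (ih h).trans ((huv n).le.trans (hvu n))
      · subst h; exact hvu j
  have hℓmono : ∀ j j', j ≤ j' → ℓ j ≤ ℓ j' := by
    intro j j' hle
    induction j' with
    | zero => exact le_of_eq (congrArg ℓ (Nat.le_zero.mp hle))
    | succ n ih =>
      rcases Nat.le_succ_iff.mp hle with h | h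
      · exact (ih h).trans (by rw [hℓsucc n]; omega)
      · subst h; rfl
  have hmpos : ∀ j, 1 ≤ m j := by
    intro j
    refine Finset.sum_pos (fun i _ => Nat.lt_of_lt_of_le Nat.zero_lt_one (hbpos i)) ?_
    rw [Finset.nonempty_Ico]; exact huv j
  have hsumlt : ∀ t, ∑ i ∈ Finset.range t, m i < 2 ^ ℓ t := by
    have key : ∀ t, (∑ i ∈ Finset.range t, m i) + t ≤ ℓ t := by
      intro t
      induction t with
      | zero => simp [hℓ]
      | succ n ih =>
        rw [Finset.sum_range_succ, hℓsucc n]; omega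
    intro t
    have := key t
    have h2t := Nat.lt_two_pow_self (n := ℓ t)
    omega
  have hmlt : ∀ j, m j < 2 ^ ℓ (j + 1) := by
    intro j
    have hle : m j ≤ ∑ i ∈ Finset.range (j + 1), m i :=
      Finset.single_le_sum (fun i _ => Nat.zero_le (m i)) (Finset.self_mem_range_succ j)
    exact hle.trans_lt (hsumlt (j + 1))
  -- the sets
  set I : ℕ → Finset ℕ := fun j => dsupp (m j) with hI
  have hIsub : ∀ j, I j ⊆ Finset.Ico (ℓ j) (ℓ (j + 1)) :=
    fun j => dsupp_subset_Ico (hdvd j) (hmlt j)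
  have hIdisj : ∀ j j' : ℕ, j ≠ j' → Disjoint (I j) (I j') := by
    have key : ∀ j j' : ℕ, j < j' → Disjoint (I j) (I j') := by
      intro j j' hlt
      rw [Finset.disjoint_left]
      intro x hx hx'
      have b1 := Finset.mem_Ico.mp (hIsub j hx)
      have b2 := Finset.mem_Ico.mp (hIsub j' hx')
      have := hℓmono (j + 1) j' hlt
      omega
    intro j j' hne
    rcases Nat.lt_or_ge j j' with h | h
    · exact key j j' h
    · exact (key j' j (by omega)).symm
  refine ⟨I, fun j => dsupp_nonempty (hmpos j), hIdisj, col, ?_⟩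
  intro J hJ
  -- the sum of the m j over J is a finite sum of b
  have hIcoDisj : (↑J : Set ℕ).PairwiseDisjoint (fun j => Finset.Ico (u j) (v j)) := by
    intro j _ j' _ hne
    have key : ∀ a a' : ℕ, a < a' → Disjoint (Finset.Ico (u a) (v a)) (Finset.Ico (u a') (v a')) := by
      intro a a' hlt
      rw [Finset.disjoint_left]
      intro x hx hx'
      have b1 := Finset.mem_Ico.mp hx
      have b2 := Finset.mem_Ico.mp hx'
      have := horder a a' hlt
      omega
    rcases Nat.lt_or_ge j j' with h | h
    · exact key j j' h
    · exact (key j' j (by omega)).symm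
  have hGne : (J.biUnion (fun j => Finset.Ico (u j) (v j))).Nonempty := by
    obtain ⟨j, hj⟩ := hJ
    exact ⟨u j, Finset.mem_biUnion.mpr ⟨j, hj, Finset.mem_Ico.mpr ⟨le_refl _, huv j⟩⟩⟩
  have hsumG : ∑ i ∈ J.biUnion (fun j => Finset.Ico (u j) (v j)), b.get i = ∑ j ∈ J, m j :=
    Finset.sum_biUnion hIcoDisj
  have hmemFS : (∑ j ∈ J, m j) ∈ Hindman.FS b := by
    rw [← hsumG]; exact Hindman.FS.finset_sum b _ hGne
  have hcol : c' (∑ j ∈ J, m j) = col := (hb hmemFS).2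
  -- identify the support of the sum with the union of the supports
  have hJdisj : (↑J : Set ℕ).PairwiseDisjoint I := fun j _ j' _ hne => hIdisj j j' hne
  have hval : ∑ j ∈ J, m j = ∑ i ∈ J.biUnion I, 2 ^ i := by
    rw [Finset.sum_biUnion hJdisj]
    exact Finset.sum_congr rfl (fun j _ => (val_dsupp (m j)).symm)
  have hsupp : dsupp (∑ j ∈ J, m j) = J.biUnion I := by
    rw [hval, dsupp_val]
  rw [hc'] at hcol
  rw [← hsupp]
  exact hcol

/-- **Disjoint Unions Theorem.**
For all positive integers `r` and `k` there exists a positive integer `n` such that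
for every `r`-coloring `c` of the (nonempty) subsets of `[n] = {1,…,n}`, there exist
pairwise disjoint nonempty sets `I 1, …, I k ⊆ [n]` such that all unions
`∪_{j ∈ J} I j` over nonempty `J ⊆ [k]` receive the same color. -/
theorem disjoint_unions_theorem (r k : ℕ) (hr : 0 < r) (hk : 0 < k) :
    ∃ n : ℕ, 0 < n ∧
      ∀ c : Finset ℕ → Fin r,
        ∃ I : Fin k → Finset ℕ,
          (∀ j, (I j).Nonempty ∧ I j ⊆ Finset.Icc 1 n) ∧
          (∀ j j' : Fin k, j ≠ j' → Disjoint (I j) (I j')) ∧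
          ∃ col : Fin r,
            ∀ J : Finset (Fin k), J.Nonempty → c (J.biUnion I) = col := by
  classical
  by_contra hcon
  push_neg at hcon
  have hbad : ∀ nn : ℕ, ∃ cb : Finset ℕ → Fin r,
      ∀ I : Fin k → Finset ℕ,
        (∀ j, (I j).Nonempty ∧ I j ⊆ Finset.Icc 1 (nn + 1)) →
        (∀ j j' : Fin k, j ≠ j' → Disjoint (I j) (I j')) →
        ∀ col : Fin r, ∃ J : Finset (Fin k), J.Nonempty ∧ cb (J.biUnion I) ≠ col := by
    intro nn
    have h1 := hcon (nn + 1) (Nat.succ_pos nn)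
    obtain ⟨cb, hcb⟩ := h1
    refine ⟨cb, fun I hI hd col => ?_⟩
    exact hcb I hI hd col
  choose e he using hbad
  set U := Filter.hyperfilter ℕ with hU
  have hch : ∀ s : Finset ℕ, ∃ v : Fin r, {nn : ℕ | e nn s = v} ∈ U := by
    intro s
    have hcov : ⋃₀ (Set.range fun v : Fin r => {nn : ℕ | e nn s = v}) ∈ U := by
      have : ⋃₀ (Set.range fun v : Fin r => {nn : ℕ | e nn s = v}) = Set.univ := by
        ext nn
        simp only [Set.mem_sUnion, Set.mem_range, Set.mem_univ, iff_true]
        exact ⟨_, ⟨e nn s, rfl⟩, rfl⟩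
      rw [this]
      exact Filter.univ_mem
    obtain ⟨t, ⟨v, rfl⟩, hv⟩ :=
      (Ultrafilter.finite_sUnion_mem_iff (Set.finite_range _)).mp hcov
    exact ⟨v, hv⟩
  choose cinf hcinf using hch
  obtain ⟨I, hne, hdisj, col, hcol⟩ :=
    infinite_folkman r (fun s => cinf (s.image (· + 1)))
  set n : ℕ := ((Finset.range k).biUnion fun j => I j).sup id + 1 with hn
  set If : Fin k → Finset ℕ := fun j => (I j.val).image (· + 1) with hIf
  have himg : ∀ J : Finset (Fin k),
      J.biUnion If = ((J.image Fin.val).biUnion I).image (· + 1) := by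
    intro J
    ext x
    simp only [hIf, Finset.mem_biUnion, Finset.mem_image]
    constructor
    · rintro ⟨j, hj, y, hy, rfl⟩
      exact ⟨y, ⟨j.val, ⟨j, hj, rfl⟩, hy⟩, rfl⟩
    · rintro ⟨y, ⟨jv, ⟨j, hj, rfl⟩, hy⟩, rfl⟩
      exact ⟨j, hj, y, hy, rfl⟩
  have goodcol : ∀ J : Finset (Fin k), J.Nonempty → cinf (J.biUnion If) = col := by
    intro J hJ
    have := hcol (J.image Fin.val) (hJ.image _)
    rw [himg J]
    exact this
  have hmemJ : ∀ J : Finset (Fin k),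
      {mm : ℕ | J.Nonempty → e mm (J.biUnion If) = col} ∈ U := by
    intro J
    by_cases hJ : J.Nonempty
    · have h1 := hcinf (J.biUnion If)
      rw [goodcol J hJ] at h1
      filter_upwards [h1] with mm hmm _
      exact hmm
    · have : {mm : ℕ | J.Nonempty → e mm (J.biUnion If) = col} = Set.univ := by
        ext mm; simp [hJ]
      rw [this]; exact Filter.univ_mem
  have hall : {mm : ℕ | ∀ J : Finset (Fin k), J.Nonempty → e mm (J.biUnion If) = col} ∈ U := by
    have heq : {mm : ℕ | ∀ J : Finset (Fin k), J.Nonempty → e mm (J.biUnion If) = col} =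
        ⋂ J : Finset (Fin k), {mm : ℕ | J.Nonempty → e mm (J.biUnion If) = col} := by
      ext mm; simp [Set.mem_iInter]
    rw [heq]
    exact Filter.iInter_mem.mpr hmemJ
  have hge : {mm : ℕ | n ≤ mm} ∈ U := by
    apply Filter.mem_hyperfilter_of_finite_compl
    have : {mm : ℕ | n ≤ mm}ᶜ = {mm : ℕ | mm < n} := by ext mm; simp
    rw [this]
    exact Set.finite_lt_nat n
  obtain ⟨mm, hmm⟩ := Ultrafilter.nonempty_of_mem (Filter.inter_mem hall hge)
  obtain ⟨hmm1, hmm2⟩ := hmm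
  -- `If` is a good family for the coloring `e mm` with bound `mm + 1`, contradiction
  have hnm : n ≤ mm := hmm2
  rw [hn] at hnm
  have hsub : ∀ j : Fin k, If j ⊆ Finset.Icc 1 (mm + 1) := by
    intro j x hx
    rw [hIf] at hx
    obtain ⟨y, hy, rfl⟩ := Finset.mem_image.mp hx
    have hyn : y ≤ ((Finset.range k).biUnion fun j => I j).sup id := by
      refine Finset.le_sup (f := id) ?_
      exact Finset.mem_biUnion.mpr ⟨j.val, Finset.mem_range.mpr j.isLt, hy⟩
    exact Finset.mem_Icc.mpr ⟨Nat.le_add_left 1 y, by omega⟩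
  have hdisj' : ∀ j j' : Fin k, j ≠ j' → Disjoint (If j) (If j') := by
    intro j j' hjj
    rw [hIf]
    simp only
    rw [Finset.disjoint_image (fun a b => Nat.add_right_cancel)]
    exact hdisj j.val j'.val (fun h => hjj (Fin.ext h))
  obtain ⟨J, hJne, hJcol⟩ :=
    he mm If (fun j => ⟨(hne j.val).image _, hsub j⟩) hdisj' col
  exact hJcol (hmm1 J hJne)
end

section
/- For all positive integers r and k there exists a positive integer n such that the following holds. Let C' be an r-coloring of the set of all n-families, and suppose there is a coloring c of the nonempty subsets of [n] such that C'(𝓘) = c(f(𝓘)) for every n-family 𝓘 satisfying |f(𝓘)| ≤ |I'| for all I' ∈ 𝓘. Then there exist pairwise disjoint nonempty sets I₁,…,I_k ⊆ [n] such that the collection {𝓙∘{I₁,…,I_k} : 𝓙 an extreme k-family} is monochromatic under C', where 𝓙∘{I₁,…,I_k} := {∪_{j∈J} I_j : J ∈ 𝓙}. -/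
/-- An `n`-family: a nonempty finite collection of pairwise disjoint nonempty
subsets of `[n] = {1,…,n}`. -/
def IsNFamily (n : ℕ) (𝓘 : Finset (Finset ℕ)) : Prop :=
  𝓘.Nonempty ∧ (∀ I ∈ 𝓘, I.Nonempty ∧ I ⊆ Finset.Icc 1 n) ∧
    (∀ I ∈ 𝓘, ∀ J ∈ 𝓘, I ≠ J → Disjoint I J)

/-- `L = f(𝓘)`: the member of `𝓘` whose maximum exceeds the maximum of every
other member. -/
def IsLeading (𝓘 : Finset (Finset ℕ)) (L : Finset ℕ) : Prop :=
  L ∈ 𝓘 ∧ ∀ I ∈ 𝓘, I ≠ L → I.max < L.max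



section PDUaux
open Hindman


lemma fs_map_coe {a : Stream' ℕ+} {x : ℕ} (hx : x ∈ FS (Stream'.map (fun p : ℕ+ => (p : ℕ)) a)) :
    ∃ y ∈ FS a, (y : ℕ) = x := by
  generalize hb : Stream'.map (fun p : ℕ+ => (p : ℕ)) a = b at hx
  induction hx generalizing a with
  | head' b => exact ⟨a.head, FS.head a, by rw [← hb, Stream'.head_map]⟩
  | tail' b m h ih =>
    obtain ⟨y, hy, hyx⟩ := ih (a := a.tail) (by rw [← hb, Stream'.map_tail])
    exact ⟨y, FS.tail a y hy, hyx⟩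
  | cons' b m h ih =>
    obtain ⟨y, hy, hyx⟩ := ih (a := a.tail) (by rw [← hb, Stream'.map_tail])
    exact ⟨a.head + y, FS.cons a y hy, by rw [← hb, Stream'.head_map]; simp [hyx]⟩

lemma fs_finset_sum (a : Stream' ℕ+) (T : Finset ℕ) (hT : T.Nonempty) :
    ∃ y ∈ FS a, (y : ℕ) = ∑ i ∈ T, (a.get i : ℕ) := by
  have := FS.finset_sum (Stream'.map (fun p : ℕ+ => (p : ℕ)) a) T hT
  simp only [Stream'.get_map] at this
  exact fs_map_coe this

/-- Infinite Folkman / finite-sums theorem for `k` terms with a single color. -/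
lemma inf_folkman (k r : ℕ) (g : ℕ → Fin r) :
    ∃ s : Fin k → ℕ, (∀ i, 0 < s i) ∧ ∃ γ : Fin r,
      ∀ T : Finset (Fin k), T.Nonempty → g (∑ i ∈ T, s i) = γ := by
  rcases Nat.eq_zero_or_pos r with rfl | hr
  · exact ⟨fun _ => 1, fun _ => one_pos, (g 1).elim0⟩
  classical
  set cov : Set (Set ℕ+) := Set.range (fun v : Fin r => {x : ℕ+ | g x = v}) with hcov
  have hfin : cov.Finite := Set.finite_range _
  have hsub : (⊤ : Set ℕ+) ⊆ ⋃₀ cov := by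
    intro x _
    exact ⟨{y : ℕ+ | g y = g x}, ⟨g x, rfl⟩, rfl⟩
  obtain ⟨C, hC, a, ha⟩ := Hindman.exists_FS_of_finite_cover cov hfin hsub
  obtain ⟨γ, rfl⟩ := hC
  refine ⟨fun i => (a.get i : ℕ), fun i => (a.get i).pos, γ, ?_⟩
  intro T hT
  -- reindex T : Finset (Fin k) into Finset ℕ
  have hT' : (T.image (fun i : Fin k => (i : ℕ))).Nonempty := hT.image _
  obtain ⟨y, hy, hyx⟩ := fs_finset_sum a (T.image (fun i : Fin k => (i : ℕ))) hT'
  have hsum : ∑ i ∈ T.image (fun i : Fin k => (i : ℕ)), (a.get i : ℕ)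
      = ∑ i ∈ T, (a.get (i : ℕ) : ℕ) := by
    rw [Finset.sum_image]
    intro x _ y _ h
    exact Fin.val_injective h
  have := ha hy
  simp only [Set.mem_setOf_eq] at this
  rw [← hsum, ← hyx]
  exact this


lemma ramsey_inf (r : ℕ) (hr : 0 < r) :
    ∀ (d : ℕ) (c : Finset ℕ → Fin r) (X : Set ℕ), X.Infinite →
      ∃ Y, Y ⊆ X ∧ Y.Infinite ∧ ∃ v, ∀ S : Finset ℕ, ↑S ⊆ Y → S.card = d → c S = v := by
  intro d
  induction d with
  | zero =>
    intro c X hX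
    refine ⟨X, le_refl _, hX, c ∅, ?_⟩
    intro S _ hS
    rw [Finset.card_eq_zero.mp hS]
  | succ d ih =>
    intro c X hX
    classical
    -- the one-step refinement
    have key : ∀ Z : Set ℕ, Z.Infinite → ∃ W, ∃ v : Fin r,
        W ⊆ Z ∩ Set.Ioi (sInf Z) ∧ W.Infinite ∧
        ∀ S : Finset ℕ, ↑S ⊆ W → S.card = d → c (insert (sInf Z) S) = v := by
      intro Z hZ
      have hZ' : (Z ∩ Set.Ioi (sInf Z)).Infinite := by
        have : Z ∩ Set.Ioi (sInf Z) = Z \ Set.Iic (sInf Z) := by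
          ext x; simp [Set.mem_Ioi, Set.mem_Iic, not_le, and_comm]
        rw [this]
        exact hZ.diff (Set.finite_Iic _)
      obtain ⟨Y, hY1, hY2, v, hv⟩ := ih (fun S => c (insert (sInf Z) S)) _ hZ'
      exact ⟨Y, v, hY1, hY2, hv⟩
    let F : Set ℕ → Set ℕ × Fin r := fun Z =>
      if h : Z.Infinite then ((key Z h).choose, (key Z h).choose_spec.choose)
      else (Z, ⟨0, hr⟩)
    let X' : ℕ → Set ℕ := fun i => (fun Z => (F Z).1)^[i] X
    have hX'succ : ∀ i, X' (i + 1) = (F (X' i)).1 := by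
      intro i
      simp only [X', Function.iterate_succ_apply']
    have hinf : ∀ i, (X' i).Infinite := by
      intro i
      induction i with
      | zero => exact hX
      | succ i ihh =>
        rw [hX'succ i]
        simp only [F, dif_pos ihh]
        exact ((key _ ihh).choose_spec.choose_spec.2.1)
    have hprop : ∀ i, X' (i+1) ⊆ X' i ∩ Set.Ioi (sInf (X' i)) ∧
        ∀ S : Finset ℕ, ↑S ⊆ X' (i+1) → S.card = d →
          c (insert (sInf (X' i)) S) = (F (X' i)).2 := by
      intro i
      rw [hX'succ i]
      simp only [F, dif_pos (hinf i)]
      exact ⟨(key _ (hinf i)).choose_spec.choose_spec.1,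
        (key _ (hinf i)).choose_spec.choose_spec.2.2⟩
    set a : ℕ → ℕ := fun i => sInf (X' i) with ha
    set f : ℕ → Fin r := fun i => (F (X' i)).2 with hf
    have hamem : ∀ i, a i ∈ X' i := fun i => Nat.sInf_mem (hinf i).nonempty
    have hmono : ∀ i j, i ≤ j → X' j ⊆ X' i := by
      intro i j hij
      induction j with
      | zero => rw [Nat.le_zero.mp hij]
      | succ j ihh =>
        rcases Nat.lt_or_ge i (j+1) with h | h
        · exact ((hprop j).1.trans Set.inter_subset_left).trans (ihh (Nat.lt_succ_iff.mp h))
        · rw [Nat.le_antisymm hij h]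
    have hastrict : StrictMono a := by
      apply strictMono_nat_of_lt_succ
      intro i
      have := (hprop i).1 (hamem (i+1))
      exact this.2
    -- pigeonhole
    have hpig : ∃ v : Fin r, {i : ℕ | f i = v}.Infinite := by
      by_contra hc
      push_neg at hc
      have : (Set.univ : Set ℕ) = ⋃ v : Fin r, {i | f i = v} := by
        ext i; simp
      have hfin : (Set.univ : Set ℕ).Finite := by
        rw [this]
        exact Set.finite_iUnion hc
      exact Set.infinite_univ hfin
    obtain ⟨v, hv⟩ := hpig
    refine ⟨a '' {i | f i = v}, ?_, hv.image (hastrict.injective.injOn), v, ?_⟩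
    · rintro x ⟨i, _, rfl⟩
      exact hmono 0 i (Nat.zero_le i) (hamem i)
    · intro S hS hcard
      have hSne : S.Nonempty := Finset.card_pos.mp (by omega)
      set m := S.min' hSne with hm
      obtain ⟨i, hfi, hai⟩ := hS (S.min'_mem hSne)
      have herase : ↑(S.erase m) ⊆ X' (i + 1) := by
        intro x hx
        simp only [Finset.coe_erase, Set.mem_diff, Set.mem_singleton_iff] at hx
        obtain ⟨hxS, hxm⟩ := hx
        obtain ⟨j, hfj, haj⟩ := hS hxS
        have hmx : m < x := lt_of_le_of_ne (S.min'_le x hxS) (Ne.symm hxm)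
        have hij : i < j := by
          by_contra hji
          push_neg at hji
          have := hastrict.monotone hji
          rw [hai, haj] at this
          omega
        rw [← haj]
        exact hmono (i+1) j hij (hamem j)
      have hcard' : (S.erase m).card = d := by
        rw [Finset.card_erase_of_mem (S.min'_mem hSne), hcard]; omega
      have hkey := (hprop i).2 (S.erase m) herase hcard'
      have him : sInf (X' i) = m := hai
      rw [him, Finset.insert_erase (S.min'_mem hSne)] at hkey
      exact hkey.trans hfi


lemma canon_chain (r : ℕ) (hr : 0 < r) (c : Finset ℕ → Fin r) :
    ∃ (Y : ℕ → Set ℕ) (g : ℕ → Fin r),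
      (∀ d, (Y d).Infinite) ∧ (∀ d, Y (d+1) ⊆ Y d) ∧ (Y 0 ⊆ {x | 0 < x}) ∧
      (∀ (d : ℕ) (S : Finset ℕ), ↑S ⊆ Y (d+1) → S.card = d + 1 → c S = g (d+1)) := by
  classical
  have key : ∀ (d : ℕ) (Z : Set ℕ), Z.Infinite → ∃ W, ∃ v : Fin r,
      W ⊆ Z ∧ W.Infinite ∧ ∀ S : Finset ℕ, ↑S ⊆ W → S.card = d → c S = v := by
    intro d Z hZ
    obtain ⟨W, h1, h2, v, hv⟩ := ramsey_inf r hr d c Z hZ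
    exact ⟨W, v, h1, h2, hv⟩
  let F : ℕ → Set ℕ → Set ℕ × Fin r := fun d Z =>
    if h : Z.Infinite then ((key d Z h).choose, (key d Z h).choose_spec.choose)
    else (Z, ⟨0, hr⟩)
  let Y : ℕ → Set ℕ := fun d => Nat.rec {x | 0 < x} (fun d Yd => (F (d+1) Yd).1) d
  have hYsucc : ∀ d, Y (d+1) = (F (d+1) (Y d)).1 := fun d => rfl
  have hY0 : Y 0 = {x | 0 < x} := rfl
  have h0inf : ({x : ℕ | 0 < x}).Infinite := by
    have : {x : ℕ | 0 < x} = Set.Ioi 0 := rfl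
    rw [this]
    exact Set.Ioi_infinite 0
  have hinf : ∀ d, (Y d).Infinite := by
    intro d
    induction d with
    | zero => exact h0inf
    | succ d ihh =>
      rw [hYsucc d]
      simp only [F, dif_pos ihh]
      exact (key (d+1) _ ihh).choose_spec.choose_spec.2.1
  have hprop : ∀ d, Y (d+1) ⊆ Y d ∧
      ∀ S : Finset ℕ, ↑S ⊆ Y (d+1) → S.card = d+1 → c S = (F (d+1) (Y d)).2 := by
    intro d
    rw [hYsucc d]
    simp only [F, dif_pos (hinf d)]
    exact ⟨(key (d+1) _ (hinf d)).choose_spec.choose_spec.1,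
      (key (d+1) _ (hinf d)).choose_spec.choose_spec.2.2⟩
  refine ⟨Y, fun d => Nat.rec ⟨0, hr⟩ (fun d _ => (F (d+1) (Y d)).2) d, hinf,
    fun d => (hprop d).1, by rw [hY0], fun d S h1 h2 => (hprop d).2 S h1 h2⟩


lemma exists_desc_perm (k : ℕ) (s : Fin k → ℕ) :
    ∃ π : Equiv.Perm (Fin k), ∀ j j' : Fin k, j ≤ j' → s (π j') ≤ s (π j) := by
  refine ⟨(Fin.revPerm).trans (Tuple.sort s), fun j j' h => ?_⟩
  have := Tuple.monotone_sort s (a := Fin.rev j') (b := Fin.rev j) (Fin.rev_le_rev.mpr h)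
  simpa using this

lemma exists_blocks (Y : Set ℕ) (hY : Y.Infinite) :
    ∀ (m : ℕ) (t : Fin m → ℕ) (a : ℕ),
      ∃ I : Fin m → Finset ℕ,
        (∀ j, ↑(I j) ⊆ Y ∩ Set.Ioi a) ∧ (∀ j, (I j).card = t j) ∧
        (∀ j j' : Fin m, j < j' → ∀ x ∈ I j, ∀ y ∈ I j', x < y) := by
  intro m
  induction m with
  | zero =>
    intro t a
    exact ⟨Fin.elim0, fun j => j.elim0, fun j => j.elim0, fun j => j.elim0⟩
  | succ m ih =>
    intro t a
    have h1 : (Y ∩ Set.Ioi a).Infinite := by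
      have : Y ∩ Set.Ioi a = Y \ Set.Iic a := by
        ext x; simp [Set.mem_Ioi, Set.mem_Iic, not_le]
      rw [this]; exact hY.diff (Set.finite_Iic a)
    obtain ⟨I0, hI0sub, hI0card⟩ := h1.exists_subset_card_eq (t 0)
    set b : ℕ := max a (I0.sup id) with hb
    obtain ⟨I', hsub', hcard', horder'⟩ := ih (fun j => t j.succ) b
    refine ⟨Fin.cases I0 I', ?_, ?_, ?_⟩
    · intro j
      refine Fin.cases ?_ ?_ j
      · simpa using hI0sub
      · intro i
        simp only [Fin.cases_succ]
        refine (hsub' i).trans ?_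
        intro x hx
        exact ⟨hx.1, Set.mem_Ioi.mpr (lt_of_le_of_lt (le_max_left _ _) hx.2)⟩
    · intro j
      refine Fin.cases ?_ ?_ j
      · simpa using hI0card
      · intro i; simpa using hcard' i
    · intro j j'
      refine Fin.cases ?_ (fun i' => ?_) j'
      · intro h
        exact absurd h (Fin.not_lt_zero j)
      · refine Fin.cases ?_ (fun i => ?_) j
        · intro _ x hx y hy
          simp only [Fin.cases_zero] at hx
          simp only [Fin.cases_succ] at hy
          have hxb : x ≤ I0.sup id := Finset.le_sup (f := id) hx
          have hyb : b < y := ((hsub' i') hy).2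
          have : I0.sup id ≤ b := le_max_right _ _
          omega
        · intro h x hx y hy
          simp only [Fin.cases_succ] at hx hy
          exact horder' i i' (by exact_mod_cast Fin.succ_lt_succ_iff.mp h) x hx y hy


lemma core_inf (r k : ℕ) (hr : 0 < r) (c : Finset ℕ → Fin r) :
    ∃ I : Fin k → Finset ℕ,
      (∀ j, (I j).Nonempty) ∧ (∀ j, ∀ x ∈ I j, 0 < x) ∧
      (∀ j j' : Fin k, j < j' → ∀ x ∈ I j, ∀ y ∈ I j', x < y) ∧
      (∀ j j' : Fin k, j ≤ j' → (I j').card ≤ (I j).card) ∧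
      ∃ γ : Fin r, ∀ J : Finset (Fin k), J.Nonempty → c (J.biUnion I) = γ := by
  classical
  obtain ⟨Y, g, hinf, hmono, hpos, hcanon⟩ := canon_chain r hr c
  obtain ⟨s, hs, γ, hγ⟩ := inf_folkman k r g
  obtain ⟨π, hπ⟩ := exists_desc_perm k s
  set N : ℕ := ∑ i : Fin k, s i with hN
  have hYmono : ∀ d e : ℕ, d ≤ e → Y e ⊆ Y d := by
    intro d e hde
    induction e with
    | zero => rw [Nat.le_zero.mp hde]
    | succ e ihh =>
      rcases Nat.lt_or_ge d (e+1) with h | h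
      · exact (hmono e).trans (ihh (Nat.lt_succ_iff.mp h))
      · rw [Nat.le_antisymm hde h]
  obtain ⟨I, hsub, hcard, horder⟩ := exists_blocks (Y N) (hinf N) k (fun j => s (π j)) 0
  have hIpos : ∀ j, ∀ x ∈ I j, 0 < x := by
    intro j x hx
    exact hpos (hYmono 0 N (Nat.zero_le N) ((hsub j hx).1))
  refine ⟨I, ?_, hIpos, horder, ?_, γ, ?_⟩
  · intro j
    rw [← Finset.card_pos, hcard j]
    exact hs (π j)
  · intro j j' hle
    rw [hcard j, hcard j']
    exact hπ j j' hle
  · intro J hJ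
    set A : Finset ℕ := J.biUnion I with hA
    have hdisj : ∀ x ∈ J, ∀ y ∈ J, x ≠ y → Disjoint (I x) (I y) := by
      intro x _ y _ hxy
      rcases lt_or_gt_of_ne hxy with h | h
      · refine Finset.disjoint_left.mpr (fun a hax hay => ?_)
        exact absurd rfl (horder x y h a hax a hay).ne
      · refine Finset.disjoint_left.mpr (fun a hax hay => ?_)
        exact absurd rfl (horder y x h a hay a hax).ne
    have hcardA : A.card = ∑ j ∈ J, s (π j) := by
      rw [hA, Finset.card_biUnion hdisj]
      exact Finset.sum_congr rfl (fun j _ => hcard j)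
    have hsum : ∑ j ∈ J, s (π j) = ∑ i ∈ J.image π, s i := by
      rw [Finset.sum_image (fun x _ y _ h => π.injective h)]
    have hle : A.card ≤ N := by
      rw [hcardA, hsum, hN]
      exact Finset.sum_le_sum_of_subset (Finset.subset_univ _)
    have hge : 1 ≤ A.card := by
      obtain ⟨j, hj⟩ := hJ
      have : (I j).Nonempty := by
        rw [← Finset.card_pos, hcard j]; exact hs (π j)
      obtain ⟨x, hx⟩ := this
      have : x ∈ A := Finset.mem_biUnion.mpr ⟨j, hj, hx⟩
      exact Finset.card_pos.mpr ⟨x, this⟩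
    have hsubA : ↑A ⊆ Y A.card := by
      intro x hx
      have : x ∈ Y N := by
        obtain ⟨j, _, hxj⟩ := Finset.mem_biUnion.mp hx
        exact (hsub j hxj).1
      exact hYmono A.card N hle this
    obtain ⟨d, hd⟩ : ∃ d, A.card = d + 1 := ⟨A.card - 1, by omega⟩
    have := hcanon d A (by rw [← hd]; exact hsubA) hd
    rw [this, ← hd, hcardA, hsum]
    exact hγ (J.image π) (hJ.image π)


lemma exists_ulim {r : ℕ} (U : Ultrafilter ℕ) (h : ℕ → Fin r) (hr : 0 < r) :
    ∃ v : Fin r, {n | h n = v} ∈ U := by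
  by_contra hc
  push_neg at hc
  have h1 : ∀ v : Fin r, {n | h n = v}ᶜ ∈ U := fun v =>
    (Ultrafilter.compl_mem_iff_notMem).2 (hc v)
  have h2 : (⋂ v : Fin r, {n | h n = v}ᶜ) ∈ U := Filter.iInter_mem.2 h1
  have h3 : (⋂ v : Fin r, {n | h n = v}ᶜ) = ∅ := by ext n; simp
  rw [h3] at h2
  exact Ultrafilter.empty_notMem h2

def GoodN (r k n : ℕ) (c : Finset ℕ → Fin r) : Prop :=
  ∃ I : Fin k → Finset ℕ,
    (∀ j, (I j).Nonempty ∧ I j ⊆ Finset.Icc 1 n) ∧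
    (∀ j j' : Fin k, j < j' → ∀ x ∈ I j, ∀ y ∈ I j', x < y) ∧
    (∀ j j' : Fin k, j ≤ j' → (I j').card ≤ (I j).card) ∧
    ∃ γ : Fin r, ∀ J : Finset (Fin k), J.Nonempty → c (J.biUnion I) = γ

lemma core_fin (r k : ℕ) (hr : 0 < r) :
    ∃ n : ℕ, 0 < n ∧ ∀ c : Finset ℕ → Fin r, GoodN r k n c := by
  classical
  by_contra hcon
  push_neg at hcon
  have hbad : ∀ n : ℕ, 0 < n → ∃ c : Finset ℕ → Fin r, ¬ GoodN r k n c := by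
    intro n hn
    obtain ⟨c, hc⟩ := hcon n hn
    exact ⟨c, hc⟩
  set cn : ℕ → Finset ℕ → Fin r := fun n =>
    if h : 0 < n then (hbad n h).choose else fun _ => ⟨0, hr⟩ with hcn
  have hcnbad : ∀ n, 0 < n → ¬ GoodN r k n (cn n) := by
    intro n hn
    simp only [hcn, dif_pos hn]
    exact (hbad n hn).choose_spec
  set U : Ultrafilter ℕ := Filter.hyperfilter ℕ with hU
  set cl : Finset ℕ → Fin r := fun A =>
    (exists_ulim U (fun n => cn n A) hr).choose with hcl
  have hclspec : ∀ A : Finset ℕ, {n | cn n A = cl A} ∈ U := fun A =>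
    (exists_ulim U (fun n => cn n A) hr).choose_spec
  obtain ⟨I, hne, hpos, horder, hcards, γ, hγ⟩ := core_inf r k hr cl
  set T : Set ℕ := ⋂ J : Finset (Fin k), {n | cn n (J.biUnion I) = cl (J.biUnion I)} with hT
  have hTU : T ∈ U := Filter.iInter_mem.2 fun J => hclspec _
  have hTinf : T.Infinite := by
    by_contra h
    rw [Set.not_infinite] at h
    exact Filter.notMem_hyperfilter_of_finite h hTU
  set N : ℕ := (Finset.univ.biUnion I).sup id with hNdef
  obtain ⟨n, hnT, hnN⟩ : ∃ n ∈ T, N < n := by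
    by_contra h
    push_neg at h
    exact hTinf (Set.Finite.subset (Set.finite_Iic N) (fun x hx => h x hx))
  refine hcnbad n (by omega) ⟨I, ?_, horder, hcards, γ, ?_⟩
  · intro j
    refine ⟨hne j, fun x hx => Finset.mem_Icc.mpr ⟨hpos j x hx, ?_⟩⟩
    have : x ≤ N := by
      refine Finset.le_sup (f := id) ?_
      exact Finset.mem_biUnion.mpr ⟨j, Finset.mem_univ j, hx⟩
    omega
  · intro J hJ
    have hmem := Set.mem_iInter.mp hnT J
    rw [Set.mem_setOf_eq] at hmem
    rw [hmem]
    exact hγ J hJ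

end PDUaux

/-- For all positive integers `r`, `k` there is `n` such that: if `C'` is an
`r`-coloring of `n`-families and `c` is a coloring of subsets of `[n]` with
`C'(𝓘) = c(f(𝓘))` for every `n`-family `𝓘` whose leading set has minimal
cardinality (`|f(𝓘)| ≤ |I'|` for all `I' ∈ 𝓘`), then there are pairwise disjoint
nonempty `I₁,…,I_k ⊆ [n]` such that `{𝓙 ∘ {I₁,…,I_k} : 𝓙 an extreme k-family}`
is monochromatic under `C'`. -/
theorem pseudo_disjoint_union (r k : ℕ) (hr : 0 < r) (hk : 0 < k) :
    ∃ n : ℕ, 0 < n ∧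
      ∀ C' : Finset (Finset ℕ) → Fin r, ∀ c : Finset ℕ → Fin r,
        (∀ 𝓘 : Finset (Finset ℕ), IsNFamily n 𝓘 →
          ∀ F : Finset ℕ, IsLeading 𝓘 F →
            (∀ I' ∈ 𝓘, F.card ≤ I'.card) → C' 𝓘 = c F) →
        ∃ I : Fin k → Finset ℕ,
          (∀ j, (I j).Nonempty ∧ I j ⊆ Finset.Icc 1 n) ∧
          (∀ j j' : Fin k, j ≠ j' → Disjoint (I j) (I j')) ∧
          ∃ col : Fin r,
            ∀ 𝓙 : Finset (Finset (Fin k)), 𝓙.Nonempty →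
              (∀ J ∈ 𝓙, J.Nonempty) →
              (∀ J ∈ 𝓙, ∀ J' ∈ 𝓙, J ≠ J' → Disjoint J J') →
              (𝓙.card = 1 ∨ ∀ J ∈ 𝓙, J.card = 1) →
              C' (𝓙.image (fun J => J.biUnion I)) = col := by
  classical
  obtain ⟨n, hn, hgood⟩ := core_fin r k hr
  refine ⟨n, hn, ?_⟩
  intro C' c hcompat
  obtain ⟨I, hneic, horder, hcards, γ, hγ⟩ := hgood c
  have hIdisj : ∀ j j' : Fin k, j ≠ j' → Disjoint (I j) (I j') := by
    intro j j' hne'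
    rcases lt_or_gt_of_ne hne' with h | h
    · exact Finset.disjoint_left.mpr fun a ha ha' =>
        absurd rfl (horder j j' h a ha a ha').ne
    · exact Finset.disjoint_left.mpr fun a ha ha' =>
        absurd rfl (horder j' j h a ha' a ha).ne
  refine ⟨I, hneic, hIdisj, γ, ?_⟩
  intro 𝓙 h𝓙ne h𝓙mem h𝓙disj h𝓙ext
  set 𝓘 : Finset (Finset ℕ) := 𝓙.image (fun J => J.biUnion I) with h𝓘
  have hBne : ∀ J : Finset (Fin k), J.Nonempty → (J.biUnion I).Nonempty := by
    intro J hJ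
    obtain ⟨j, hj⟩ := hJ
    obtain ⟨x, hx⟩ := (hneic j).1
    exact ⟨x, Finset.mem_biUnion.mpr ⟨j, hj, hx⟩⟩
  have hBsub : ∀ J : Finset (Fin k), J.biUnion I ⊆ Finset.Icc 1 n := by
    intro J x hx
    obtain ⟨j, _, hxj⟩ := Finset.mem_biUnion.mp hx
    exact (hneic j).2 hxj
  have hBdisj : ∀ J J' : Finset (Fin k), Disjoint J J' →
      Disjoint (J.biUnion I) (J'.biUnion I) := by
    intro J J' hd
    refine Finset.disjoint_left.mpr fun x hx hx' => ?_
    obtain ⟨j, hj, hxj⟩ := Finset.mem_biUnion.mp hx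
    obtain ⟨j', hj', hxj'⟩ := Finset.mem_biUnion.mp hx'
    have hjj : j ≠ j' := fun h => (Finset.disjoint_left.mp hd hj) (h ▸ hj')
    exact (Finset.disjoint_left.mp (hIdisj j j' hjj) hxj) hxj'
  have hfam : IsNFamily n 𝓘 := by
    refine ⟨h𝓙ne.image _, ?_, ?_⟩
    · intro A hA
      obtain ⟨J, hJ, rfl⟩ := Finset.mem_image.mp hA
      exact ⟨hBne J (h𝓙mem J hJ), hBsub J⟩
    · intro A hA B hB hAB
      obtain ⟨J, hJ, rfl⟩ := Finset.mem_image.mp hA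
      obtain ⟨J', hJ', rfl⟩ := Finset.mem_image.mp hB
      have : J ≠ J' := fun h => hAB (by rw [h])
      exact hBdisj J J' (h𝓙disj J hJ J' hJ' this)
  rcases h𝓙ext with hcard1 | hsing
  · -- single member family
    obtain ⟨J0, hJ0⟩ := Finset.card_eq_one.mp hcard1
    have hJ0mem : J0 ∈ 𝓙 := by rw [hJ0]; exact Finset.mem_singleton_self J0
    have h𝓘eq : 𝓘 = {J0.biUnion I} := by rw [h𝓘, hJ0, Finset.image_singleton]
    have hlead : IsLeading 𝓘 (J0.biUnion I) := by
      constructor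
      · rw [h𝓘eq]; exact Finset.mem_singleton_self _
      · intro B hB hBne'
        rw [h𝓘eq, Finset.mem_singleton] at hB
        exact absurd hB hBne'
    have hmin : ∀ I' ∈ 𝓘, (J0.biUnion I).card ≤ I'.card := by
      intro B hB
      rw [h𝓘eq, Finset.mem_singleton] at hB
      rw [hB]
    rw [hcompat 𝓘 hfam _ hlead hmin]
    exact hγ J0 (h𝓙mem J0 hJ0mem)
  · -- all singletons
    set S : Finset (Fin k) := 𝓙.biUnion id with hS
    have hSne : S.Nonempty := by
      obtain ⟨J, hJ⟩ := h𝓙ne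
      obtain ⟨j, hj⟩ := h𝓙mem J hJ
      exact ⟨j, Finset.mem_biUnion.mpr ⟨J, hJ, hj⟩⟩
    have hmem𝓘 : ∀ A ∈ 𝓘, ∃ j ∈ S, A = I j := by
      intro A hA
      obtain ⟨J, hJ, rfl⟩ := Finset.mem_image.mp hA
      obtain ⟨j, hj⟩ := Finset.card_eq_one.mp (hsing J hJ)
      refine ⟨j, Finset.mem_biUnion.mpr ⟨J, hJ, by rw [hj]; exact Finset.mem_singleton_self j⟩, ?_⟩
      rw [hj, Finset.singleton_biUnion]
    set jm : Fin k := S.max' hSne with hjm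
    have hjmS : jm ∈ S := S.max'_mem hSne
    have hFmem : I jm ∈ 𝓘 := by
      obtain ⟨J, hJ, hjJ⟩ := Finset.mem_biUnion.mp hjmS
      obtain ⟨j, hj⟩ := Finset.card_eq_one.mp (hsing J hJ)
      have : j = jm := by
        rw [hj] at hjJ
        exact (Finset.mem_singleton.mp hjJ).symm
      refine Finset.mem_image.mpr ⟨J, hJ, ?_⟩
      rw [hj, this, Finset.singleton_biUnion]
    have hmaxlt : ∀ j j' : Fin k, j < j' → (I j).max < (I j').max := by
      intro j j' hlt
      have h1 := (hneic j).1
      have h2 := (hneic j').1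
      rw [← Finset.coe_max' h1, ← Finset.coe_max' h2]
      exact_mod_cast horder j j' hlt _ (Finset.max'_mem _ h1) _ (Finset.max'_mem _ h2)
    have hlead : IsLeading 𝓘 (I jm) := by
      refine ⟨hFmem, ?_⟩
      intro B hB hBne'
      obtain ⟨j, hjS, rfl⟩ := hmem𝓘 B hB
      have hjne : j ≠ jm := fun h => hBne' (by rw [h])
      exact hmaxlt j jm (lt_of_le_of_ne (S.le_max' j hjS) hjne)
    have hmin : ∀ I' ∈ 𝓘, (I jm).card ≤ I'.card := by
      intro B hB
      obtain ⟨j, hjS, rfl⟩ := hmem𝓘 B hB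
      exact hcards j jm (S.le_max' j hjS)
    rw [hcompat 𝓘 hfam _ hlead hmin]
    have := hγ {jm} (Finset.singleton_nonempty jm)
    rw [Finset.singleton_biUnion] at this
    exact this
end

section
/- (Multidimensional polynomial van der Waerden, revised) Let I be a finite set and let P be a finite set of tuples p⃗ = (p_i)_{i∈I} of polynomials with nonnegative rational coefficients, each p_i having zero constant term. Then for all positive integers r and d₀ there exists a finite set S ⊆ (d₀·ℕ)^I such that for every coloring C : S → {1,…,r} there exist x ∈ S and d ∈ ℕ such that for every p⃗ ∈ P, the point x + p⃗(d) lies in S and C(x + p⃗(d)) = C(x), where p⃗(d) := (p_i(d))_{i∈I}. -/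
open Polynomial Finset

namespace PVDW

universe u
variable {ι : Type u} [Fintype ι]

noncomputable section
open scoped Classical

/-- evaluation of a polynomial tuple at a natural number -/
def ev (p : ι → Polynomial ℚ) (d : ℕ) : ι → ℚ := fun i => (p i).eval (d : ℚ)

def Good (p : ι → Polynomial ℚ) : Prop := ∀ i, (p i).coeff 0 = 0

def deg (p : ι → Polynomial ℚ) : ℕ := Finset.univ.sup fun i => (p i).natDegree

def lead (k : ℕ) (p : ι → Polynomial ℚ) : ι → ℚ := fun i => (p i).coeff k

/-- the PET-derived polynomial tuple:  x ↦ (p(x+F) - p(F)) - (q(x+E) - q(E)) -/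
def gp (q p : ι → Polynomial ℚ) (F E : ℕ) : ι → Polynomial ℚ :=
  fun i => ((p i).comp (X + C (F:ℚ)) - C ((p i).eval (F:ℚ)))
         - ((q i).comp (X + C (E:ℚ)) - C ((q i).eval (E:ℚ)))

def Esum (d : ℕ → ℕ) (i j : ℕ) : ℕ := ∑ t ∈ Finset.Ico i j, d t

def mcnt (P : Finset (ι → Polynomial ℚ)) (k : ℕ) : ℕ :=
  ((P.filter fun p => p ≠ 0 ∧ deg p = k).image (lead k)).card

lemma natDegree_le_deg (p : ι → Polynomial ℚ) (i : ι) : (p i).natDegree ≤ deg p :=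
  Finset.le_sup (f := fun i => (p i).natDegree) (Finset.mem_univ i)

lemma ev_zero_of_good {p : ι → Polynomial ℚ} (hp : Good p) : ev p 0 = 0 := by
  funext i
  simp only [ev, Nat.cast_zero, Pi.zero_apply]
  rw [← coeff_zero_eq_eval_zero]; exact hp i

lemma ev_zero_tuple (d : ℕ) : ev (0 : ι → Polynomial ℚ) d = 0 := by
  funext i; simp [ev]

lemma ev_gp (q p : ι → Polynomial ℚ) (F E e : ℕ) :
    ev (gp q p F E) e = ((ev p (F + e) - ev p F) - (ev q (E + e) - ev q E)) := by
  funext i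
  simp only [ev, gp, Pi.sub_apply, eval_sub, eval_comp, eval_add, eval_X, eval_C]
  push_cast
  ring_nf

lemma good_gp {q p : ι → Polynomial ℚ} (F E : ℕ) : Good (gp q p F E) := by
  intro i
  simp only [gp, coeff_zero_eq_eval_zero, eval_sub, eval_comp, eval_add, eval_X, eval_C,
    zero_add]
  ring

lemma natDegree_comp_linear (f : Polynomial ℚ) (c : ℚ) :
    (f.comp (X + C c)).natDegree = f.natDegree := by
  rw [natDegree_comp, natDegree_X_add_C, mul_one]

lemma coeff_comp_linear_high {f : Polynomial ℚ} {c : ℚ} {k : ℕ} (hk : f.natDegree ≤ k) :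
    (f.comp (X + C c)).coeff k = f.coeff k := by
  rcases eq_or_lt_of_le hk with h | h
  · subst h
    have h1 : (f.comp (X + C c)).natDegree = f.natDegree := natDegree_comp_linear f c
    have h2 : (f.comp (X + C c)).leadingCoeff = f.leadingCoeff := by
      rw [leadingCoeff_comp (by rw [natDegree_X_add_C]; norm_num)]
      rw [leadingCoeff_X_add_C, one_pow, mul_one]
    have := h2
    rw [leadingCoeff, leadingCoeff, h1] at this
    exact this
  · rw [coeff_eq_zero_of_natDegree_lt h, coeff_eq_zero_of_natDegree_lt]
    rw [natDegree_comp_linear]; exact h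

lemma deg_gp_le {q p : ι → Polynomial ℚ} {F E : ℕ} (h : deg q ≤ deg p) :
    deg (gp q p F E) ≤ deg p := by
  apply Finset.sup_le
  intro i _
  have h1 : (p i).natDegree ≤ deg p := natDegree_le_deg p i
  have h2 : (q i).natDegree ≤ deg p := le_trans (natDegree_le_deg q i) h
  simp only [gp]
  refine le_trans (natDegree_sub_le _ _) ?_
  refine max_le (le_trans (natDegree_sub_le _ _) ?_) (le_trans (natDegree_sub_le _ _) ?_)
  · exact max_le (by rw [natDegree_comp_linear]; exact h1) (by simp)
  · exact max_le (by rw [natDegree_comp_linear]; exact h2) (by simp)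

lemma lead_gp_high {q p : ι → Polynomial ℚ} {F E k : ℕ} (hk1 : 1 ≤ k)
    (hkp : deg p ≤ k) (hkq : deg q ≤ k) :
    lead k (gp q p F E) = lead k p - lead k q := by
  funext i
  have h1 : (p i).natDegree ≤ k := le_trans (natDegree_le_deg p i) hkp
  have h2 : (q i).natDegree ≤ k := le_trans (natDegree_le_deg q i) hkq
  simp only [lead, gp, Pi.sub_apply, coeff_sub]
  rw [coeff_comp_linear_high h1, coeff_comp_linear_high h2,
    coeff_C, if_neg (by omega), coeff_C, if_neg (by omega)]
  ring

lemma lead_eq_zero_of_lt {p : ι → Polynomial ℚ} {k : ℕ} (h : deg p < k) :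
    lead k p = 0 := by
  funext i
  have : (p i).natDegree ≤ deg p := natDegree_le_deg p i
  simp only [lead, Pi.zero_apply]
  exact coeff_eq_zero_of_natDegree_lt (by omega)

lemma lead_ne_zero_of_deg {p : ι → Polynomial ℚ} {k : ℕ} (hp : p ≠ 0) (hk : deg p = k)
    (hk1 : 1 ≤ k) : lead k p ≠ 0 := by
  rcases isEmpty_or_nonempty ι with hι | hι
  · exact absurd (funext fun i => (IsEmpty.elim hι i)) hp
  obtain ⟨i, -, hi⟩ := Finset.exists_mem_eq_sup Finset.univ Finset.univ_nonempty
    (fun i => (p i).natDegree)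
  have hdi : (p i).natDegree = k := by rw [← hk]; exact (show deg p = _ from hi).symm
  have hpi : p i ≠ 0 := fun h => by simp [h] at hdi; omega
  intro hcon
  have : (p i).coeff k = 0 := congrFun hcon i
  rw [← hdi] at this
  exact (leadingCoeff_ne_zero.mpr hpi) this

lemma deg_ge_of_lead_ne {p : ι → Polynomial ℚ} {k : ℕ} (h : lead k p ≠ 0) :
    k ≤ deg p := by
  have : ∃ i, (p i).coeff k ≠ 0 := by
    by_contra hcon
    push_neg at hcon
    exact h (funext fun i => hcon i)
  obtain ⟨i, hi⟩ := this
  exact le_trans (le_natDegree_of_ne_zero hi) (natDegree_le_deg p i)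

lemma deg_pos_of_good {p : ι → Polynomial ℚ} (hg : Good p) (hp : p ≠ 0) : 1 ≤ deg p := by
  have : ∃ i, p i ≠ 0 := by
    by_contra hcon
    push_neg at hcon
    exact hp (funext fun i => hcon i)
  obtain ⟨i, hi⟩ := this
  have : 1 ≤ (p i).natDegree := by
    by_contra hcon
    push_neg at hcon
    have h0 : (p i).natDegree = 0 := by omega
    obtain ⟨a, ha⟩ := natDegree_eq_zero.mp h0
    have hga := hg i
    rw [← ha, coeff_C] at hga
    simp at hga
    rw [← ha, hga] at hi
    simp at hi
  exact le_trans this (natDegree_le_deg p i)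


/-! ### Lexicographic measure -/

def Mlex : ℕ → Type
  | 0 => PUnit
  | (K+1) => ℕ × Mlex K

def MlexRel : (K : ℕ) → Mlex K → Mlex K → Prop
  | 0 => fun _ _ => False
  | (K+1) => Prod.Lex (· < ·) (MlexRel K)

lemma mlexWF : ∀ K, WellFounded (MlexRel K)
  | 0 => ⟨fun a => ⟨a, fun _ h => absurd h (by simp [MlexRel])⟩⟩
  | (K+1) => WellFounded.prod_lex (Nat.lt_wfRel.wf) (mlexWF K)

def measVec (P : Finset (ι → Polynomial ℚ)) : (K : ℕ) → Mlex K
  | 0 => ⟨⟩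
  | (K+1) => ((mcnt P (K+1), measVec P K) : ℕ × Mlex K)

lemma measVec_lt {P Q : Finset (ι → Polynomial ℚ)} {k₀ : ℕ} (hk1 : 1 ≤ k₀)
    (hhigh : ∀ j, k₀ < j → mcnt Q j ≤ mcnt P j) (hlow : mcnt Q k₀ < mcnt P k₀) :
    ∀ K, k₀ ≤ K → MlexRel K (measVec Q K) (measVec P K) := by
  intro K
  induction K with
  | zero => intro h; omega
  | succ K IH =>
    intro hk
    rcases eq_or_lt_of_le hk with h | h
    · subst h
      exact Prod.Lex.left _ _ hlow
    · have hK : k₀ ≤ K := by omega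
      rcases lt_or_eq_of_le (hhigh (K+1) (by omega)) with h2 | h2
      · exact Prod.Lex.left _ _ h2
      · show Prod.Lex _ _ (mcnt Q (K+1), measVec Q K) (mcnt P (K+1), measVec P K)
        rw [h2]
        exact Prod.Lex.right _ (IH hK)

/-! ### Counting lemmas -/

section Count

variable {P : Finset (ι → Polynomial ℚ)} {q : ι → Polynomial ℚ}

-- If `deg p > deg q` then `gp q p F E` has the same degree and top coefficients as `p`.
lemma deg_gp_eq {p : ι → Polynomial ℚ} (hp : p ≠ 0)
    (hq : deg q < deg p) {F E : ℕ} :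
    deg (gp q p F E) = deg p ∧ lead (deg p) (gp q p F E) = lead (deg p) p := by
  have h1 : 1 ≤ deg p := by omega
  have hlead : lead (deg p) (gp q p F E) = lead (deg p) p := by
    rw [lead_gp_high h1 le_rfl (le_of_lt hq), lead_eq_zero_of_lt hq, sub_zero]
  constructor
  · refine le_antisymm (deg_gp_le (le_of_lt hq)) ?_
    apply deg_ge_of_lead_ne
    rw [hlead]
    exact lead_ne_zero_of_deg hp rfl h1
  · exact hlead

lemma mcnt_high (hgood : ∀ p ∈ P, Good p) (hq : q ∈ P) (hq0 : q ≠ 0)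
    (hmin : ∀ p ∈ P, p ≠ 0 → deg q ≤ deg p)
    {Q : Finset (ι → Polynomial ℚ)}
    (hQ : ∀ g ∈ Q, ∃ p F E, p ∈ P ∧ p ≠ 0 ∧ g = gp q p F E)
    {j : ℕ} (hj : deg q < j) : mcnt Q j ≤ mcnt P j := by
  apply Finset.card_le_card
  intro v hv
  simp only [Finset.mem_image] at hv ⊢
  obtain ⟨g, hgmem, rfl⟩ := hv
  rw [Finset.mem_filter] at hgmem
  obtain ⟨hgQ, hg0, hgdeg⟩ := hgmem
  obtain ⟨p, F, E, hpP, hp0, rfl⟩ := hQ _ hgQ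
  have hqle : deg q ≤ deg p := hmin p hpP hp0
  -- show deg p = j
  have hdegp : deg p = j := by
    have hle : j ≤ deg p := hgdeg ▸ deg_gp_le hqle
    rcases eq_or_lt_of_le hle with h | h
    · exact h.symm
    · exfalso
      have := (deg_gp_eq (q := q) hp0 (show deg q < deg p by omega) (F := F) (E := E)).1
      omega
  refine ⟨p, Finset.mem_filter.mpr ⟨hpP, hp0, hdegp⟩, ?_⟩
  have := (deg_gp_eq (q := q) hp0 (show deg q < deg p by omega) (F := F) (E := E)).2
  rw [hdegp] at this
  rw [← this]

lemma mcnt_low (hgood : ∀ p ∈ P, Good p) (hq : q ∈ P) (hq0 : q ≠ 0)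
    (hmin : ∀ p ∈ P, p ≠ 0 → deg q ≤ deg p)
    {Q : Finset (ι → Polynomial ℚ)}
    (hQ : ∀ g ∈ Q, ∃ p F E, p ∈ P ∧ p ≠ 0 ∧ g = gp q p F E) :
    mcnt Q (deg q) < mcnt P (deg q) := by
  set k₀ := deg q with hk₀
  have hk1 : 1 ≤ k₀ := deg_pos_of_good (hgood q hq) hq0
  have hmem : lead k₀ q ∈ (P.filter fun p => p ≠ 0 ∧ deg p = k₀).image (lead k₀) :=
    Finset.mem_image_of_mem _ (Finset.mem_filter.mpr ⟨hq, hq0, rfl⟩)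
  have hsub : (Q.filter fun g => g ≠ 0 ∧ deg g = k₀).image (lead k₀) ⊆
      (((P.filter fun p => p ≠ 0 ∧ deg p = k₀).image (lead k₀)).erase (lead k₀ q)).image
        (fun v => v - lead k₀ q) := by
    intro v hv
    simp only [Finset.mem_image] at hv
    obtain ⟨g, hgmem, rfl⟩ := hv
    rw [Finset.mem_filter] at hgmem
    obtain ⟨hgQ, hg0, hgdeg⟩ := hgmem
    obtain ⟨p, F, E, hpP, hp0, rfl⟩ := hQ _ hgQ
    have hqle : k₀ ≤ deg p := hmin p hpP hp0
    have hdegp : deg p = k₀ := by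
      rcases eq_or_lt_of_le hqle with h | h
      · exact h.symm
      · exfalso
        have := (deg_gp_eq (q := q) hp0 h (F := F) (E := E)).1
        have h2 := hgdeg
        omega
    have hlead : lead k₀ (gp q p F E) = lead k₀ p - lead k₀ q :=
      lead_gp_high hk1 (le_of_eq hdegp) le_rfl
    have hne : lead k₀ p ≠ lead k₀ q := by
      intro hcon
      apply lead_ne_zero_of_deg hg0 hgdeg hk1
      rw [hlead, hcon, sub_self]
    apply Finset.mem_image.mpr
    refine ⟨lead k₀ p, Finset.mem_erase.mpr ⟨hne, Finset.mem_image_of_mem _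
      (Finset.mem_filter.mpr ⟨hpP, hp0, hdegp⟩)⟩, hlead.symm⟩
  have h1 : mcnt Q k₀ ≤
      ((((P.filter fun p => p ≠ 0 ∧ deg p = k₀).image (lead k₀)).erase (lead k₀ q)).image
        (fun v => v - lead k₀ q)).card := Finset.card_le_card hsub
  have h2 := Finset.card_image_le (s := (((P.filter fun p => p ≠ 0 ∧ deg p = k₀).image
    (lead k₀))).erase (lead k₀ q)) (f := fun v => v - lead k₀ q)
  have h3 := Finset.card_erase_of_mem hmem
  have h4 : 1 ≤ mcnt P k₀ := Finset.card_pos.mpr ⟨_, hmem⟩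
  unfold mcnt at *
  omega

end Count

lemma Esum_pos {d : ℕ → ℕ} {i j s : ℕ} (hij : i < j) (hjs : j ≤ s)
    (h : ∀ t, t < s → 0 < d t) : 0 < Esum d i j :=
  Finset.sum_pos (fun t ht => h t (by rw [Finset.mem_Ico] at ht; omega))
    ⟨i, Finset.mem_Ico.mpr ⟨le_rfl, hij⟩⟩

/-- The main PET recursion. -/
theorem claim (L : AddSubgroup (ι → ℚ)) (K : ℕ) (P : Finset (ι → Polynomial ℚ))
    (hG : ∀ p ∈ P, Good p) (hK : ∀ p ∈ P, deg p ≤ K)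
    (hL : ∀ p ∈ P, ∀ n : ℕ, ev p n ∈ L)
    (κ : Type u) [hκ : Fintype κ] :
    ∃ (σ τ : Type) (_ : Fintype σ) (_ : Fintype τ) (X : σ → (ι → ℚ)) (D : τ → ℕ),
      (∀ t, X t ∈ L) ∧ (∀ u, 0 < D u) ∧
      ∀ C : (ι → ℚ) → κ, ∃ t u, ∀ p ∈ P, C (X t + ev p (D u)) = C (X t) := by
  have H : ∀ (v : Mlex K), ∀ (P : Finset (ι → Polynomial ℚ)), measVec P K = v →
      (∀ p ∈ P, Good p) → (∀ p ∈ P, deg p ≤ K) → (∀ p ∈ P, ∀ n : ℕ, ev p n ∈ L) →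
      ∀ (κ : Type u) [Fintype κ],
      ∃ (σ τ : Type) (_ : Fintype σ) (_ : Fintype τ) (X : σ → (ι → ℚ)) (D : τ → ℕ),
        (∀ t, X t ∈ L) ∧ (∀ u, 0 < D u) ∧
        ∀ C : (ι → ℚ) → κ, ∃ t u, ∀ p ∈ P, C (X t + ev p (D u)) = C (X t) := by
    intro v
    induction v using (mlexWF K).induction with
    | _ v IH =>
    intro P hv hG hK hL κ hκ
    subst hv
    by_cases hP1 : (P.filter fun p => p ≠ 0) = ∅
    · refine ⟨PUnit, PUnit, inferInstance, inferInstance, fun _ => 0, fun _ => 1,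
        fun _ => L.zero_mem, fun _ => one_pos, ?_⟩
      intro C
      refine ⟨⟨⟩, ⟨⟩, ?_⟩
      intro p hp
      have hp0 : p = 0 := by
        by_contra h
        have : p ∈ P.filter fun p => p ≠ 0 := Finset.mem_filter.mpr ⟨hp, h⟩
        simp [hP1] at this
      subst hp0
      rw [ev_zero_tuple, add_zero]
    · obtain ⟨q, hqP1, hqmin⟩ := Finset.exists_min_image (P.filter fun p => p ≠ 0) deg
        (Finset.nonempty_iff_ne_empty.mpr hP1)
      rw [Finset.mem_filter] at hqP1
      obtain ⟨hqP, hq0⟩ := hqP1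
      have hqmin' : ∀ p ∈ P, p ≠ 0 → deg q ≤ deg p := fun p hp h0 =>
        hqmin p (Finset.mem_filter.mpr ⟨hp, h0⟩)
      -- the fan ("color focusing") induction
      have fan : ∀ s : ℕ, ∃ (σA τA : Type) (_ : Fintype σA) (_ : Fintype τA)
          (A : σA → (ι → ℚ)) (Ds : τA → ℕ → ℕ),
          (∀ t, A t ∈ L) ∧ (∀ u' t, t < s → 0 < Ds u' t) ∧
          ∀ C : (ι → ℚ) → κ, ∃ t u, ∀ i j : ℕ, i < j → j ≤ s → ∀ p ∈ P, p ≠ 0 →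
            C (A t - ev q (Esum (Ds u) 0 j) + ev p (Esum (Ds u) i j))
              = C (A t - ev q (Esum (Ds u) 0 i)) := by
        intro s
        induction s with
        | zero =>
          refine ⟨PUnit, PUnit, inferInstance, inferInstance, fun _ => 0, fun _ _ => 1,
            fun _ => L.zero_mem, fun _ _ h => absurd h (by omega), fun C =>
            ⟨⟨⟩, ⟨⟩, fun i j hij hj p _ _ => absurd (hij.trans_le hj) (Nat.not_lt_zero i)⟩⟩
        | succ s IHs =>
          obtain ⟨σA, τA, iA1, iA2, A, Ds, hAL, hDpos, hFan⟩ := IHs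
          letI := iA1
          letI := iA2
          set Pstar : Finset (ι → Polynomial ℚ) :=
            ((P.filter fun p => p ≠ 0) ×ˢ (Finset.univ : Finset (τA × Fin (s+1)))).image
              (fun x => gp q x.1 (Esum (Ds x.2.1) (x.2.2 : ℕ) s) (Esum (Ds x.2.1) 0 s))
            with hPstar
          have hQform : ∀ g ∈ Pstar, ∃ p F E, p ∈ P ∧ p ≠ 0 ∧ g = gp q p F E := by
            intro g hg
            rw [hPstar, Finset.mem_image] at hg
            obtain ⟨x, hmem, rfl⟩ := hg
            rw [Finset.mem_product, Finset.mem_filter] at hmem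
            exact ⟨x.1, _, _, hmem.1.1, hmem.1.2, rfl⟩
          have hGs : ∀ g ∈ Pstar, Good g := fun g hg => by
            obtain ⟨p, F, E, _, _, rfl⟩ := hQform g hg; exact good_gp F E
          have hKs : ∀ g ∈ Pstar, deg g ≤ K := fun g hg => by
            obtain ⟨p, F, E, hp, h0, rfl⟩ := hQform g hg
            exact le_trans (deg_gp_le (hqmin' p hp h0)) (hK p hp)
          have hLs : ∀ g ∈ Pstar, ∀ m : ℕ, ev g m ∈ L := fun g hg m => by
            obtain ⟨p, F, E, hp, h0, rfl⟩ := hQform g hg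
            rw [ev_gp]
            exact sub_mem (sub_mem (hL p hp _) (hL p hp _))
              (sub_mem (hL q hqP _) (hL q hqP _))
          have hlt : MlexRel K (measVec Pstar K) (measVec P K) :=
            measVec_lt (deg_pos_of_good (hG q hqP) hq0)
              (fun j hj => mcnt_high hG hqP hq0 hqmin' hQform hj)
              (mcnt_low hG hqP hq0 hqmin' hQform)
              K (le_trans (hK q hqP) le_rfl)
          obtain ⟨σs, τs, is1, is2, Xs, Dstar, hXsL, hDstarpos, hWs⟩ :=
            IH (measVec Pstar K) hlt Pstar rfl hGs hKs hLs
              ((σA × τA × {p : ι → Polynomial ℚ // p ∈ P.filter fun p => p ≠ 0}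
                × Fin (s+1)) → κ)
          letI := is1
          letI := is2
          refine ⟨σs × σA, τs × τA, inferInstance, inferInstance,
            (fun z => Xs z.1 + A z.2),
            (fun z t => if t < s then Ds z.2 t else Dstar z.1),
            (fun z => L.add_mem (hXsL z.1) (hAL z.2)), ?_, ?_⟩
          · intro z t ht
            by_cases h : t < s
            · simpa [h] using hDpos z.2 t h
            · simpa [h] using hDstarpos z.1
          · intro C
            set w : σA × τA × {p : ι → Polynomial ℚ // p ∈ P.filter fun p => p ≠ 0}
                × Fin (s+1) → (ι → ℚ) :=
              fun ω => A ω.1 + ev (ω.2.2.1 : ι → Polynomial ℚ) (Esum (Ds ω.2.1) (ω.2.2.2 : ℕ) s)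
                       - ev q (Esum (Ds ω.2.1) 0 s) with hw
            obtain ⟨ts, us, hΨ⟩ := hWs (fun y ω => C (y + w ω))
            set e := Dstar us with he
            obtain ⟨t, u, hpair⟩ := hFan (fun y => C (Xs ts + y))
            refine ⟨(ts, t), (us, u), ?_⟩
            intro i j hij hjs p hp hp0
            have hswap : ∀ a b : ℕ, b ≤ s →
                Esum (fun n => if n < s then Ds u n else e) a b = Esum (Ds u) a b := by
              intro a b hb
              refine Finset.sum_congr rfl fun n hn => ?_
              rw [Finset.mem_Ico] at hn
              simp [show n < s by omega]
            rcases Nat.lt_succ_iff_lt_or_eq.mp (Nat.lt_succ_of_le hjs) with hjs' | hjs'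
            · -- j ≤ s : directly from the old fan, recentered
              have h1 := hpair i j hij (by omega) p hp hp0
              show C (Xs ts + A t
                    - ev q (Esum (fun n => if n < s then Ds u n else e) 0 j)
                    + ev p (Esum (fun n => if n < s then Ds u n else e) i j))
                  = C (Xs ts + A t - ev q (Esum (fun n => if n < s then Ds u n else e) 0 i))
              rw [hswap 0 j (by omega), hswap i j (by omega), hswap 0 i (by omega)]
              convert h1 using 2 <;> abel
            · -- j = s+1 : the new ray, via the derived family
              subst hjs'
              have hi_le : i ≤ s := by omega
              show C (Xs ts + A t
                    - ev q (Esum (fun n => if n < s then Ds u n else e) 0 (s+1))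
                    + ev p (Esum (fun n => if n < s then Ds u n else e) i (s+1)))
                  = C (Xs ts + A t - ev q (Esum (fun n => if n < s then Ds u n else e) 0 i))
              have htop : ∀ a, a ≤ s →
                  Esum (fun n => if n < s then Ds u n else e) a (s+1)
                    = Esum (Ds u) a s + e := by
                intro a ha
                rw [Esum, Finset.sum_Ico_succ_top ha, if_neg (lt_irrefl s)]
                congr 1
                exact hswap a s le_rfl
              rw [htop 0 (by omega), htop i hi_le, hswap 0 i (by omega)]
              have hgmem : gp q p (Esum (Ds u) i s) (Esum (Ds u) 0 s) ∈ Pstar := by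
                rw [hPstar, Finset.mem_image]
                exact ⟨(p, (u, (⟨i, by omega⟩ : Fin (s+1)))),
                  Finset.mem_product.mpr ⟨Finset.mem_filter.mpr ⟨hp, hp0⟩,
                    Finset.mem_univ _⟩, rfl⟩
              have hΨ1 := congrFun (hΨ _ hgmem)
                (t, u, ⟨p, Finset.mem_filter.mpr ⟨hp, hp0⟩⟩, (⟨i, by omega⟩ : Fin (s+1)))
              simp only [hw] at hΨ1
              rw [ev_gp] at hΨ1
              have step1 : C (Xs ts + A t - ev q (Esum (Ds u) 0 s + e)
                    + ev p (Esum (Ds u) i s + e))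
                  = C (Xs ts + (A t + ev p (Esum (Ds u) i s) - ev q (Esum (Ds u) 0 s))) := by
                convert hΨ1 using 2 <;> abel
              rw [step1]
              rcases eq_or_lt_of_le hi_le with hi | hi
              · subst hi
                have hF0 : Esum (Ds u) i i = 0 := by simp [Esum]
                apply congrArg C
                rw [hF0, ev_zero_of_good (hG p hp)]
                abel
              · have hfp := hpair i s hi le_rfl p hp hp0
                convert hfp using 2 <;> abel
      -- conclude via pigeonhole on the fan of size (card κ)
      obtain ⟨σA, τA, i1, i2, A, Ds, hAL, hDpos, hFan⟩ := fan (Fintype.card κ)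
      letI := i1
      letI := i2
      refine ⟨σA × τA × Fin (Fintype.card κ + 1),
        τA × Fin (Fintype.card κ + 1) × Fin (Fintype.card κ + 1),
        inferInstance, inferInstance,
        (fun z => A z.1 - ev q (Esum (Ds z.2.1) 0 (z.2.2 : ℕ))),
        (fun z => max 1 (Esum (Ds z.1) (z.2.1 : ℕ) (z.2.2 : ℕ))), ?_, ?_, ?_⟩
      · intro z; exact sub_mem (hAL z.1) (hL q hqP _)
      · intro z; exact lt_of_lt_of_le one_pos (le_max_left _ _)
      · intro C
        obtain ⟨t, u, hpair⟩ := hFan C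
        have key : ∀ i j : Fin (Fintype.card κ + 1), (i:ℕ) < (j:ℕ) →
            C (A t - ev q (Esum (Ds u) 0 (i:ℕ))) = C (A t - ev q (Esum (Ds u) 0 (j:ℕ))) →
            ∃ t' u', ∀ p ∈ P,
              C ((fun z : σA × τA × Fin (Fintype.card κ + 1) =>
                    A z.1 - ev q (Esum (Ds z.2.1) 0 (z.2.2:ℕ))) t'
                  + ev p ((fun z : τA × Fin (Fintype.card κ + 1) × Fin (Fintype.card κ + 1) =>
                    max 1 (Esum (Ds z.1) (z.2.1:ℕ) (z.2.2:ℕ))) u'))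
                = C ((fun z : σA × τA × Fin (Fintype.card κ + 1) =>
                    A z.1 - ev q (Esum (Ds z.2.1) 0 (z.2.2:ℕ))) t') := by
          intro i j hij heq
          refine ⟨(t, u, j), (u, i, j), ?_⟩
          intro p hp
          have hmax : max 1 (Esum (Ds u) (i:ℕ) (j:ℕ)) = Esum (Ds u) (i:ℕ) (j:ℕ) :=
            max_eq_right (Esum_pos hij (Fin.is_le j) (fun n hn => hDpos u n hn))
          dsimp only
          rw [hmax]
          by_cases hp0 : p = 0
          · subst hp0; rw [ev_zero_tuple, add_zero]
          · have h2 := hpair (i:ℕ) (j:ℕ) hij (Fin.is_le j) p hp hp0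
            rw [h2]
            exact heq
        obtain ⟨i, j, hne, heq⟩ := Fintype.exists_ne_map_eq_of_card_lt
          (fun i : Fin (Fintype.card κ + 1) => C (A t - ev q (Esum (Ds u) 0 (i:ℕ))))
          (by simp)
        rcases Ne.lt_or_gt hne with h | h
        · exact key i j h heq
        · exact key j i h heq.symm
  exact H (measVec P K) P rfl hG hK hL κ

/-! ### Final assembly helpers -/

lemma mul_den_int (c : ℚ) (N : ℕ) (h : c.den ∣ N) : ∃ z : ℤ, c * N = z := by
  obtain ⟨t, rfl⟩ := h
  refine ⟨c.num * t, ?_⟩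
  push_cast
  rw [← Rat.mul_den_eq_num c]
  ring

lemma eval_mem_zmul {p : Polynomial ℚ} (h0 : p.coeff 0 = 0) (d₀ N d : ℕ)
    (hden : ∀ k ≤ p.natDegree, (p.coeff k).den ∣ N) :
    p.eval ((d₀ * N * d : ℕ) : ℚ) ∈ AddSubgroup.zmultiples ((d₀ : ℕ) : ℚ) := by
  rw [Polynomial.eval_eq_sum_range]
  apply AddSubgroup.sum_mem
  intro k hk
  rw [Finset.mem_range] at hk
  match k with
  | 0 =>
    rw [h0]
    simpa using AddSubgroup.zero_mem _
  | (k+1) =>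
    obtain ⟨z, hz⟩ := mul_den_int (p.coeff (k+1)) N (hden (k+1) (by omega))
    rw [AddSubgroup.mem_zmultiples_iff]
    refine ⟨z * (d₀:ℤ)^k * (N:ℤ)^k * (d:ℤ)^(k+1), ?_⟩
    rw [zsmul_eq_mul]
    push_cast
    rw [← hz]
    ring

lemma eval_nonneg {p : Polynomial ℚ} (hp : ∀ k, 0 ≤ p.coeff k) {x : ℚ} (hx : 0 ≤ x) :
    0 ≤ p.eval x := by
  rw [Polynomial.eval_eq_sum_range]
  exact Finset.sum_nonneg fun k _ => mul_nonneg (hp k) (pow_nonneg hx k)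

lemma exists_m {d₀ : ℕ} (hd₀ : 0 < d₀) {v : ℚ}
    (hv : v ∈ AddSubgroup.zmultiples ((d₀ : ℕ) : ℚ)) (hpos : 0 < v) :
    ∃ m : ℕ, 0 < m ∧ v = (d₀ : ℚ) * m := by
  obtain ⟨z, hz⟩ := AddSubgroup.mem_zmultiples_iff.mp hv
  rw [zsmul_eq_mul] at hz
  have hd₀' : (0:ℚ) < (d₀:ℚ) := by exact_mod_cast hd₀
  have hzpos : 0 < z := by
    by_contra h
    push_neg at h
    have : (z:ℚ) ≤ 0 := by exact_mod_cast h
    nlinarith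
  refine ⟨z.toNat, by omega, ?_⟩
  have : ((z.toNat : ℤ) : ℚ) = (z : ℚ) := by exact_mod_cast Int.toNat_of_nonneg (le_of_lt hzpos)
  rw [← hz]
  push_cast at this ⊢
  rw [this]
  ring

end
end PVDW


/-- **Multidimensional polynomial van der Waerden (revised).**
Let `I = ι` be a finite index set and `P` a finite set of tuples
`p⃗ = (p_i)_{i ∈ ι}` of polynomials with nonnegative rational coefficients, each
with zero constant term.  Then for all positive integers `r` and `d₀` there is a
finite set `S ⊆ (d₀·ℕ)^ι` such that for every `r`-coloring `C` of `S` there are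
`x ∈ S` and a positive integer `d` with `x + p⃗(d) ∈ S` and
`C(x + p⃗(d)) = C(x)` for every `p⃗ ∈ P`, where `p⃗(d) = (p_i(d))_{i ∈ ι}`. -/
theorem multidim_poly_vdW_revised {ι : Type*} [Fintype ι]
    (P : Finset (ι → Polynomial ℚ))
    (hP : ∀ p ∈ P, ∀ i : ι, (∀ k : ℕ, 0 ≤ (p i).coeff k) ∧ (p i).coeff 0 = 0)
    (r d₀ : ℕ) (hr : 0 < r) (hd₀ : 0 < d₀) :
    ∃ S : Finset (ι → ℚ),
      (∀ s ∈ S, ∀ i : ι, ∃ m : ℕ, 0 < m ∧ s i = (d₀ : ℚ) * m) ∧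
      ∀ C : (ι → ℚ) → Fin r,
        ∃ x ∈ S, ∃ d : ℕ, 0 < d ∧
          ∀ p ∈ P, (fun i => x i + (p i).eval (d : ℚ)) ∈ S ∧
            C (fun i => x i + (p i).eval (d : ℚ)) = C x := by
  classical
  set Lat : AddSubgroup (ι → ℚ) :=
    AddSubgroup.pi Set.univ (fun _ => AddSubgroup.zmultiples ((d₀ : ℕ) : ℚ)) with hLat
  obtain ⟨N, hN, hden⟩ : ∃ N : ℕ, 0 < N ∧ ∀ p ∈ P, ∀ i : ι, ∀ k,
      k ≤ (p i).natDegree → ((p i).coeff k).den ∣ N := by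
    obtain ⟨f, hf⟩ : ∃ f : (ι → Polynomial ℚ) → ℕ, ∀ p,
        f p = ∏ i : ι, ∏ k ∈ Finset.range ((p i).natDegree + 1), ((p i).coeff k).den :=
      ⟨_, fun _ => rfl⟩
    refine ⟨∏ p ∈ P, f p, ?_, ?_⟩
    · apply Finset.prod_pos; intro p _
      rw [hf]
      apply Finset.prod_pos; intro i _
      apply Finset.prod_pos; intro k _; exact ((p i).coeff k).den_pos
    · intro p hp i k hk
      have h1 : ((p i).coeff k).den ∣
          ∏ k ∈ Finset.range ((p i).natDegree + 1), ((p i).coeff k).den :=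
        Finset.dvd_prod_of_mem (fun k => ((p i).coeff k).den)
          (Finset.mem_range.mpr (by omega))
      have h2 : (∏ k ∈ Finset.range ((p i).natDegree + 1), ((p i).coeff k).den) ∣ f p := by
        rw [hf]
        exact Finset.dvd_prod_of_mem
          (fun i => ∏ k ∈ Finset.range ((p i).natDegree + 1), ((p i).coeff k).den)
          (Finset.mem_univ i)
      exact h1.trans (h2.trans (Finset.dvd_prod_of_mem f hp))
  set B : ℕ := d₀ * N with hBdef
  have hB : 0 < B := Nat.mul_pos hd₀ hN
  -- the substituted family
  set F : (ι → Polynomial ℚ) → (ι → Polynomial ℚ) :=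
    fun p => fun i => (p i).comp (Polynomial.C ((B : ℕ) : ℚ) * Polynomial.X) with hF
  set P' : Finset (ι → Polynomial ℚ) := P.image F with hP'
  have hev : ∀ p (n : ℕ), PVDW.ev (F p) n = PVDW.ev p (B * n) := by
    intro p n
    funext i
    simp only [PVDW.ev, hF, Polynomial.eval_comp, Polynomial.eval_mul, Polynomial.eval_C,
      Polynomial.eval_X]
    push_cast
    ring_nf
  have hG' : ∀ p' ∈ P', PVDW.Good p' := by
    intro p' hp'
    obtain ⟨p, hp, rfl⟩ := Finset.mem_image.mp hp'
    intro i
    rw [Polynomial.coeff_zero_eq_eval_zero]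
    simp only [hF, Polynomial.eval_comp, Polynomial.eval_mul, Polynomial.eval_C,
      Polynomial.eval_X, mul_zero]
    rw [← Polynomial.coeff_zero_eq_eval_zero]
    exact (hP p hp i).2
  have hLmem : ∀ p ∈ P, ∀ n : ℕ, PVDW.ev p (B * n) ∈ Lat := by
    intro p hp n
    rw [hLat]
    rw [AddSubgroup.mem_pi]
    intro i _
    have : B * n = d₀ * N * n := by rw [hBdef]
    rw [this]
    exact PVDW.eval_mem_zmul (hP p hp i).2 d₀ N n (fun k hk => hden p hp i k hk)
  have hL' : ∀ p' ∈ P', ∀ n : ℕ, PVDW.ev p' n ∈ Lat := by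
    intro p' hp' n
    obtain ⟨p, hp, rfl⟩ := Finset.mem_image.mp hp'
    rw [hev]
    exact hLmem p hp n
  have hK' : ∀ p' ∈ P', PVDW.deg p' ≤ P'.sup PVDW.deg := fun p' hp' => Finset.le_sup hp'
  obtain ⟨σ, τ, iσ, iτ, Xf, Df, hXL, hDpos, hW⟩ :=
    PVDW.claim Lat (P'.sup PVDW.deg) P' hG' hK' hL' (ULift (Fin r))
  letI := iσ
  letI := iτ
  -- choose the translation amount M
  set M : ℕ := 1 + Finset.univ.sup (fun z : σ × ι => (⌈ -(Xf z.1 z.2) / ((d₀:ℕ) : ℚ) ⌉).toNat)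
    with hM
  have hd₀Q : (0:ℚ) < ((d₀:ℕ):ℚ) := by exact_mod_cast hd₀
  have hMbig : ∀ (t : σ) (i : ι), -(Xf t i) < ((d₀:ℕ):ℚ) * M := by
    intro t i
    have h1 : -(Xf t i) / ((d₀:ℕ):ℚ) ≤ ⌈ -(Xf t i) / ((d₀:ℕ):ℚ) ⌉ := Int.le_ceil _
    have h2 : (⌈ -(Xf t i) / ((d₀:ℕ):ℚ) ⌉ : ℚ) ≤ ((⌈ -(Xf t i) / ((d₀:ℕ):ℚ) ⌉.toNat : ℕ) : ℚ) := by
      exact_mod_cast Int.self_le_toNat _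
    have h3 : (⌈ -(Xf t i) / ((d₀:ℕ):ℚ) ⌉.toNat : ℕ) ≤
        Finset.univ.sup (fun z : σ × ι => (⌈ -(Xf z.1 z.2) / ((d₀:ℕ) : ℚ) ⌉).toNat) :=
      Finset.le_sup (f := fun z : σ × ι => (⌈ -(Xf z.1 z.2) / ((d₀:ℕ) : ℚ) ⌉).toNat)
        (Finset.mem_univ (t, i))
    have h4 : -(Xf t i) / ((d₀:ℕ):ℚ) < M := by
      have : ((⌈ -(Xf t i) / ((d₀:ℕ):ℚ) ⌉.toNat : ℕ) : ℚ) < (M : ℚ) := by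
        rw [hM]
        push_cast
        have := h3
        exact_mod_cast (by omega : (⌈ -(Xf t i) / ((d₀:ℕ):ℚ) ⌉.toNat : ℕ) <
          1 + Finset.univ.sup (fun z : σ × ι => (⌈ -(Xf z.1 z.2) / ((d₀:ℕ) : ℚ) ⌉).toNat))
      exact lt_of_le_of_lt (h1.trans h2) this
    calc -(Xf t i) = (-(Xf t i) / ((d₀:ℕ):ℚ)) * ((d₀:ℕ):ℚ) := by field_simp
    _ < (M:ℚ) * ((d₀:ℕ):ℚ) := by
        apply mul_lt_mul_of_pos_right h4 hd₀Q
    _ = ((d₀:ℕ):ℚ) * M := by ring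
  set T : ι → ℚ := fun _ => ((d₀:ℕ):ℚ) * M with hT
  -- the finite configuration set
  set S : Finset (ι → ℚ) :=
    (Finset.univ.image fun t : σ => Xf t + T) ∪
    ((P ×ˢ (Finset.univ : Finset (σ × τ))).image
      fun z => Xf z.2.1 + T + PVDW.ev z.1 (B * Df z.2.2)) with hS
  have hTmem : ∀ i : ι, T i ∈ AddSubgroup.zmultiples ((d₀ : ℕ) : ℚ) := by
    intro i
    rw [AddSubgroup.mem_zmultiples_iff]
    exact ⟨(M : ℤ), by rw [zsmul_eq_mul]; push_cast; ring⟩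
  have hbase : ∀ (t : σ) (i : ι), (Xf t + T) i ∈ AddSubgroup.zmultiples ((d₀ : ℕ) : ℚ) ∧
      0 < (Xf t + T) i := by
    intro t i
    constructor
    · have h1 : Xf t i ∈ AddSubgroup.zmultiples ((d₀ : ℕ) : ℚ) := by
        have := hXL t
        rw [hLat, AddSubgroup.mem_pi] at this
        exact this i (Set.mem_univ i)
      exact AddSubgroup.add_mem _ h1 (hTmem i)
    · have := hMbig t i
      show 0 < Xf t i + T i
      rw [hT]
      dsimp only
      linarith
  have hevmem : ∀ p ∈ P, ∀ u : τ, ∀ i : ι,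
      PVDW.ev p (B * Df u) i ∈ AddSubgroup.zmultiples ((d₀ : ℕ) : ℚ) ∧
      0 ≤ PVDW.ev p (B * Df u) i := by
    intro p hp u i
    constructor
    · have := hLmem p hp (Df u)
      rw [hLat, AddSubgroup.mem_pi] at this
      exact this i (Set.mem_univ i)
    · exact PVDW.eval_nonneg (fun k => (hP p hp i).1 k) (by positivity)
  refine ⟨S, ?_, ?_⟩
  · -- membership conditions
    intro s hs i
    rw [hS, Finset.mem_union] at hs
    rcases hs with hs | hs
    · obtain ⟨t, -, rfl⟩ := Finset.mem_image.mp hs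
      exact PVDW.exists_m hd₀ (hbase t i).1 (hbase t i).2
    · obtain ⟨z, hz, rfl⟩ := Finset.mem_image.mp hs
      rw [Finset.mem_product] at hz
      have h1 := hbase z.2.1 i
      have h2 := hevmem z.1 hz.1 z.2.2 i
      refine PVDW.exists_m hd₀ ?_ ?_
      · exact AddSubgroup.add_mem _ h1.1 h2.1
      · show 0 < (Xf z.2.1 + T) i + PVDW.ev z.1 (B * Df z.2.2) i
        linarith [h1.2, h2.2]
  · -- coloring part
    intro C
    obtain ⟨t, u, hcol⟩ := hW (fun y => ULift.up.{u_1} (C (y + T)))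
    refine ⟨Xf t + T, ?_, B * Df u, Nat.mul_pos hB (hDpos u), ?_⟩
    · rw [hS, Finset.mem_union]
      exact Or.inl (Finset.mem_image.mpr ⟨t, Finset.mem_univ t, rfl⟩)
    · intro p hp
      have hpt : (fun i => (Xf t + T) i + (p i).eval (((B * Df u : ℕ) : ℚ)))
          = Xf t + T + PVDW.ev p (B * Df u) := by
        funext i
        rfl
      constructor
      · rw [hpt, hS, Finset.mem_union]
        refine Or.inr (Finset.mem_image.mpr ⟨(p, (t, u)), ?_, rfl⟩)
        rw [Finset.mem_product]
        exact ⟨hp, Finset.mem_univ _⟩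
      · rw [hpt]
        have hc := hcol (F p) (Finset.mem_image_of_mem F hp)
        have hc2 := congrArg ULift.down hc
        simp only at hc2
        rw [hev] at hc2
        calc C (Xf t + T + PVDW.ev p (B * Df u))
            = C (Xf t + PVDW.ev p (B * Df u) + T) := by
              apply congrArg C; abel
        _ = C (Xf t + T) := hc2
end
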